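/- In every idempotent residuated chain, the divisions are given by: x\y = x^r ∨ y if x ≤ y, and x\y = x^r ∧ y if y < x; similarly y/x = x^ℓ ∨ y if x ≤ y, and y/x = x^ℓ ∧ y if y < x. -/

import Mathlib

/-!
Residuation makes multiplication monotone, and idempotence then confines a product between
its factors: `a ⊓ b ≤ a * b ≤ a ⊔ b`, with `a * b` above both factors when `1 ≤ a * b` and
below both when `a * b ≤ 1` (multiply once more by a factor). For `t = x \ y` either
`x * t ≤ 1`, i.e. `t ≤ x \ 1`, or `x ⊔ t ≤ x * t ≤ y`; this yields the upper bounds, and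
`x * (x \ 1) ≤ x ⊓ (x \ 1)` the lower ones. Right division is left division in `Mᵐᵒᵖ`.
-/

section Monotonicity

variable {M : Type*} [Mul M] [Preorder M]

theorem mulLeftMono_of_residuated {ld : M → M → M}
    (resl : ∀ x y z : M, x * y ≤ z ↔ y ≤ ld x z) : MulLeftMono M :=
  ⟨fun a _ c h => (resl a _ (a * c)).mpr (h.trans ((resl a c _).mp le_rfl))⟩

theorem mulRightMono_of_residuated {rd : M → M → M}
    (resr : ∀ x y z : M, x * y ≤ z ↔ x ≤ rd z y) : MulRightMono M :=
  ⟨fun a _ c h => (resr _ a (c * a)).mpr (h.trans ((resr c a _).mp le_rfl))⟩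

end Monotonicity

section IdempotentOrderedMonoid

variable {M : Type*} [Monoid M] [Lattice M] [MulLeftMono M] [MulRightMono M]
  (idem : ∀ a : M, a * a = a)
include idem

theorem inf_le_mul_of_idem (a b : M) : a ⊓ b ≤ a * b :=
  calc a ⊓ b = (a ⊓ b) * (a ⊓ b) := (idem _).symm
    _ ≤ a * b := mul_le_mul' inf_le_left inf_le_right

theorem mul_le_sup_of_idem (a b : M) : a * b ≤ a ⊔ b :=
  calc a * b ≤ (a ⊔ b) * (a ⊔ b) := mul_le_mul' le_sup_left le_sup_right
    _ = a ⊔ b := idem _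

theorem sup_le_mul_of_one_le_mul {a b : M} (h : 1 ≤ a * b) : a ⊔ b ≤ a * b := by
  refine sup_le ?_ ?_
  · calc a = a * 1 := (mul_one a).symm
      _ ≤ a * (a * b) := mul_le_mul_right h a
      _ = a * b := by rw [← mul_assoc, idem]
  · calc b = 1 * b := (one_mul b).symm
      _ ≤ a * b * b := mul_le_mul_left h b
      _ = a * b := by rw [mul_assoc, idem]

theorem mul_le_inf_of_mul_le_one {a b : M} (h : a * b ≤ 1) : a * b ≤ a ⊓ b := by
  refine le_inf ?_ ?_
  · calc a * b = a * (a * b) := by rw [← mul_assoc, idem]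
      _ ≤ a * 1 := mul_le_mul_right h a
      _ = a := mul_one a
  · calc a * b = a * b * b := by rw [mul_assoc, idem]
      _ ≤ 1 * b := mul_le_mul_left h b
      _ = b := one_mul b

end IdempotentOrderedMonoid

section LeftResiduation

variable {M : Type*} [Monoid M] [LinearOrder M] [MulLeftMono M] [MulRightMono M]
  {ld : M → M → M} (resl : ∀ x y z : M, x * y ≤ z ↔ y ≤ ld x z)
  (idem : ∀ a : M, a * a = a)
include resl idem

theorem ld_le_ld_one_or (x y : M) : ld x y ≤ ld x 1 ∨ (x ≤ y ∧ ld x y ≤ y) := by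
  have hmul : x * ld x y ≤ y := (resl _ _ _).mpr le_rfl
  rcases le_or_gt (x * ld x y) 1 with h | h
  · exact .inl ((resl _ _ _).mp h)
  · have := (sup_le_mul_of_one_le_mul idem h.le).trans hmul
    exact .inr (sup_le_iff.mp this)

theorem ld_eq_ld_one_sup {x y : M} (hxy : x ≤ y) : ld x y = ld x 1 ⊔ y := by
  refine le_antisymm ?_ (sup_le ?_ ?_)
  · rcases ld_le_ld_one_or resl idem x y with h | ⟨-, h⟩
    exacts [le_sup_of_le_left h, le_sup_of_le_right h]
  · refine (resl _ _ _).mp ?_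
    have hone : x * ld x 1 ≤ 1 := (resl _ _ _).mpr le_rfl
    exact (mul_le_inf_of_mul_le_one idem hone).trans (inf_le_left.trans hxy)
  · refine (resl _ _ _).mp ?_
    exact (mul_le_sup_of_idem idem x y).trans (sup_le hxy le_rfl)

theorem ld_eq_ld_one_inf {x y : M} (hyx : y < x) : ld x y = ld x 1 ⊓ y := by
  have hmul : x * ld x y ≤ y := (resl _ _ _).mpr le_rfl
  refine le_antisymm (le_inf ?_ ?_) ?_
  · exact (ld_le_ld_one_or resl idem x y).resolve_right fun h => hyx.not_ge h.1
  · have := (inf_le_mul_of_idem idem x (ld x y)).trans hmul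
    rcases inf_le_iff.mp this with h | h
    exacts [absurd h hyx.not_ge, h]
  · refine (resl _ _ _).mp ?_
    have hone : x * (ld x 1 ⊓ y) ≤ 1 := (resl _ _ _).mpr inf_le_left
    exact (mul_le_inf_of_mul_le_one idem hone).trans (inf_le_right.trans inf_le_right)

end LeftResiduation

namespace MulOpposite

variable {M : Type*}

instance [LinearOrder M] : LinearOrder Mᵐᵒᵖ := LinearOrder.lift' unop unop_injective

instance [Mul M] [Preorder M] [MulRightMono M] : MulLeftMono Mᵐᵒᵖ :=
  ⟨fun a _ _ h => mul_le_mul_left (α := M) h a.unop⟩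

instance [Mul M] [Preorder M] [MulLeftMono M] : MulRightMono Mᵐᵒᵖ :=
  ⟨fun a _ _ h => mul_le_mul_right (α := M) h a.unop⟩

theorem unop_sup [LinearOrder M] (a b : Mᵐᵒᵖ) : unop (a ⊔ b) = unop a ⊔ unop b :=
  Monotone.map_max fun _ _ => id

theorem unop_inf [LinearOrder M] (a b : Mᵐᵒᵖ) : unop (a ⊓ b) = unop a ⊓ unop b :=
  Monotone.map_min fun _ _ => id

end MulOpposite

section RightResiduation

open MulOpposite

variable {M : Type*} [Monoid M] [LinearOrder M] {rd : M → M → M}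
  (resr : ∀ x y z : M, x * y ≤ z ↔ x ≤ rd z y)
include resr

theorem mul_le_iff_le_op_rd (a b c : Mᵐᵒᵖ) : a * b ≤ c ↔ b ≤ op (rd c.unop a.unop) :=
  resr b.unop a.unop c.unop

variable [MulLeftMono M] [MulRightMono M] (idem : ∀ a : M, a * a = a)
include idem

theorem rd_eq_rd_one_sup {x y : M} (hxy : x ≤ y) : rd y x = rd 1 x ⊔ y := by
  have := ld_eq_ld_one_sup (mul_le_iff_le_op_rd resr) (fun a => congrArg op (idem a.unop))
    (op_le_op.mpr hxy)
  simpa only [unop_op, unop_one, unop_sup] using congrArg unop this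

theorem rd_eq_rd_one_inf {x y : M} (hyx : y < x) : rd y x = rd 1 x ⊓ y := by
  have := ld_eq_ld_one_inf (mul_le_iff_le_op_rd resr) (fun a => congrArg op (idem a.unop))
    (show op y < op x from hyx)
  simpa only [unop_op, unop_one, unop_inf] using congrArg unop this

end RightResiduation

/-- In every idempotent residuated chain the divisions are given by:
`x\y = x^r ∨ y` if `x ≤ y`, `x\y = x^r ∧ y` if `y < x`; and
`y/x = x^ℓ ∨ y` if `x ≤ y`, `y/x = x^ℓ ∧ y` if `y < x`. -/
theorem stmt7 {A : Type*} [LinearOrder A] [Monoid A]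
    (ld rd : A → A → A)
    (resl : ∀ x y z : A, x * y ≤ z ↔ y ≤ ld x z)
    (resr : ∀ x y z : A, x * y ≤ z ↔ x ≤ rd z y)
    (idem : ∀ x : A, x * x = x) :
    ∀ x y : A,
      (x ≤ y → ld x y = ld x 1 ⊔ y) ∧
      (y < x → ld x y = ld x 1 ⊓ y) ∧
      (x ≤ y → rd y x = rd 1 x ⊔ y) ∧
      (y < x → rd y x = rd 1 x ⊓ y) := by
  have := mulLeftMono_of_residuated resl
  have := mulRightMono_of_residuated resr
  exact fun x y => ⟨ld_eq_ld_one_sup resl idem, ld_eq_ld_one_inf resl idem,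
    rd_eq_rd_one_sup resr idem, rd_eq_rd_one_inf resr idem⟩
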